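/- Let χ be a Dirichlet character mod N, M | N with gcd(M, N/M) = 1, and χ′ the Dirichlet character mod N that equals χ mod N/M and \overline{χ} mod M. Let ι_AL : ρ_{χ′} → T_M ρ_χ be the inclusion 𝔢_γ ↦ \overline{χ}(I_{I₂}(γ_{M,N} I_{m_M}(γ))) 𝔢_{γ_{M,N} I_{m_M}(γ)} ⊗ 𝔢_{m_M·γ}, and π_AL its adjoint projection. Then for every f ∈ M_k(Γ₀(N), χ) and every v ∈ ℂ[Γ₀(N)\SL₂(ℤ)] = V(ρ_{χ′}): ⟨Ind(W_M f), v⟩ = ⟨π_AL(T_M Ind f), v⟩ = ⟨T_M Ind f, ι_AL(v)⟩, where W_M(f) = f|_k(γ_{M,N} m_M) is the Atkin–Lehner involution and Ind(W_M f) is formed with respect to the character χ′. -/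

import Mathlib

open scoped MatrixGroups Manifold Kronecker ComplexConjugate Classical ComplexOrder
open Matrix UpperHalfPlane Complex Filter MeasureTheory CongruenceSubgroup

noncomputable section

namespace VVMF

abbrev GL2ℤ := Matrix (Fin 2) (Fin 2) ℤ

/-- The automorphy factor `c τ + d` for `γ ∈ SL(2,ℤ)`. -/
def denomZ (γ : SL(2, ℤ)) (τ : ℍ) : ℂ :=
  ((γ 1 0 : ℤ) : ℂ) * (τ : ℂ) + ((γ 1 1 : ℤ) : ℂ)

/-- `ρ` is a (matrix) representation of `SL(2,ℤ)`. -/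
def IsRep {ι : Type*} [Fintype ι] (ρ : SL(2, ℤ) → Matrix ι ι ℂ) : Prop :=
  ρ 1 = 1 ∧ ∀ γ δ : SL(2, ℤ), ρ (γ * δ) = ρ γ * ρ δ

/-- The weight-`k` slash action `f ∣_{k,ρ} γ` on vector-valued functions. -/
def vslash {ι : Type*} [Fintype ι] (k : ℤ) (ρ : SL(2, ℤ) → Matrix ι ι ℂ)
    (γ : SL(2, ℤ)) (f : ℍ → ι → ℂ) : ℍ → ι → ℂ :=
  fun τ => (denomZ γ τ) ^ (-k) • (ρ γ⁻¹).mulVec (f (γ • τ))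

/-- Vector-valued modular form of weight `k` and type `ρ`: holomorphic,
slash-invariant, with all components (equivalently, all functionals) bounded
towards `i∞`. -/
def IsVModForm {ι : Type*} [Fintype ι] (k : ℤ) (ρ : SL(2, ℤ) → Matrix ι ι ℂ)
    (f : ℍ → ι → ℂ) : Prop :=
  (∀ i, MDifferentiable 𝓘(ℂ) 𝓘(ℂ) (fun τ : ℍ => f τ i)) ∧
  (∀ γ : SL(2, ℤ), vslash k ρ γ f = f) ∧
  (∀ i, IsBoundedAtImInfty (fun τ : ℍ => f τ i))

/-- Vector-valued cusp form. -/
def IsVCuspForm {ι : Type*} [Fintype ι] (k : ℤ) (ρ : SL(2, ℤ) → Matrix ι ι ℂ)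
    (f : ℍ → ι → ℂ) : Prop :=
  (∀ i, MDifferentiable 𝓘(ℂ) 𝓘(ℂ) (fun τ : ℍ => f τ i)) ∧
  (∀ γ : SL(2, ℤ), vslash k ρ γ f = f) ∧
  (∀ i, IsZeroAtImInfty (fun τ : ℍ => f τ i))

/-- The space `M_k(ρ)` of modular forms of weight `k` and type `ρ`. -/
def Mk {ι : Type*} [Fintype ι] (k : ℤ) (ρ : SL(2, ℤ) → Matrix ι ι ℂ) :
    Set (ℍ → ι → ℂ) := {f | IsVModForm k ρ f}

/-- The trivial one-dimensional representation `𝟙` of `SL(2,ℤ)`. -/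
def oneRep : SL(2, ℤ) → Matrix Unit Unit ℂ := fun _ => 1

/-- The scalar slash action on ℂ-valued functions. -/
def cslash (k : ℤ) (γ : SL(2, ℤ)) (f : ℍ → ℂ) : ℍ → ℂ :=
  fun τ => (denomZ γ τ) ^ (-k) * f (γ • τ)

/-- A Dirichlet character mod `N` evaluated on the lower right entry `d(γ)`. -/
def dirSL {N : ℕ} (χ : DirichletCharacter ℂ N) (γ : SL(2, ℤ)) : ℂ :=
  χ (((γ 1 1 : ℤ) : ZMod N))

/-- Classical modular form of weight `k` for `Γ₀(N)` and Dirichlet character `χ`. -/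
def IsModFormChi {N : ℕ} (k : ℤ) (χ : DirichletCharacter ℂ N) (f : ℍ → ℂ) : Prop :=
  MDifferentiable 𝓘(ℂ) 𝓘(ℂ) f ∧
  (∀ γ ∈ Gamma0 N, (fun τ => dirSL χ γ⁻¹ * cslash k γ f τ) = f) ∧
  (∀ γ : SL(2, ℤ), IsBoundedAtImInfty (cslash k γ f))

/-- Classical cusp form of weight `k` for `Γ₀(N)` and Dirichlet character `χ`. -/
def IsCuspFormChi {N : ℕ} (k : ℤ) (χ : DirichletCharacter ℂ N) (f : ℍ → ℂ) : Prop :=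
  MDifferentiable 𝓘(ℂ) 𝓘(ℂ) f ∧
  (∀ γ ∈ Gamma0 N, (fun τ => dirSL χ γ⁻¹ * cslash k γ f τ) = f) ∧
  (∀ γ : SL(2, ℤ), IsZeroAtImInfty (cslash k γ f))

/-! ### The sets `Δ_M` and vector-valued Hecke operators -/

/-- Membership in `Δ_M`: upper triangular, positive diagonal (automatic for `M > 0`),
determinant `M`, and `0 ≤ b < d`. -/
def DeltaPred (M : ℕ) (m : GL2ℤ) : Prop :=
  m 1 0 = 0 ∧ 0 < m 0 0 ∧ m 0 0 * m 1 1 = (M : ℤ) ∧ 0 ≤ m 0 1 ∧ m 0 1 < m 1 1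

/-- The set `Δ_M` of upper triangular matrices `(a b; 0 d)`, `a d = M`, `0 ≤ b < d`. -/
def Delta (M : ℕ) : Type := {m : GL2ℤ // DeltaPred M m}

instance (M : ℕ) : Finite (Delta M) := by
  have key : ∀ m : Delta M, m.1 0 0 ≤ (M : ℤ) ∧ m.1 0 1 ≤ (M : ℤ) ∧ m.1 1 1 ≤ (M : ℤ) := by
    rintro ⟨m, hc, ha, hdet, hb0, hbd⟩
    have hd : 1 ≤ m 1 1 := by nlinarith
    have ha' : 1 ≤ m 0 0 := ha
    refine ⟨?_, ?_, ?_⟩ <;> nlinarith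
  refine Finite.of_injective
    (fun m : Delta M => ((⟨(m.1 0 0).toNat, ?_⟩ : Fin (M+1)), (⟨(m.1 0 1).toNat, ?_⟩ : Fin (M+1)),
      (⟨(m.1 1 1).toNat, ?_⟩ : Fin (M+1)))) ?_
  · have := key m; omega
  · have := key m; omega
  · have := key m; omega
  · intro m m' h
    have h1 := congrArg (fun p => (p.1 : Fin (M+1)).val) h
    have h2 := congrArg (fun p => (p.2.1 : Fin (M+1)).val) h
    have h3 := congrArg (fun p => (p.2.2 : Fin (M+1)).val) h
    simp only at h1 h2 h3
    have e1 : m.1 0 0 = m'.1 0 0 := by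
      have p1 := m.2.2.1; have p2 := m'.2.2.1
      omega
    have e2 : m.1 0 1 = m'.1 0 1 := by
      have p1 := m.2.2.2.2.1; have p2 := m'.2.2.2.2.1
      omega
    have e3 : m.1 1 1 = m'.1 1 1 := by
      have p1 := m.2.2.2.2.1; have p2 := m'.2.2.2.2.1
      have q1 := m.2.2.2.2.2; have q2 := m'.2.2.2.2.2
      omega
    apply Subtype.ext
    ext i j
    fin_cases i <;> fin_cases j
    · exact e1
    · exact e2
    · show m.1 1 0 = m'.1 1 0
      rw [m.2.1, m'.2.1]
    · exact e3

instance (M : ℕ) : Fintype (Delta M) := Fintype.ofFinite _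

/-- `HeckeData M bar coc` asserts that for every `m ∈ Δ_M` and `γ ∈ SL(2,ℤ)` we have
`m γ = I_m(γ) · overline{m γ}` with `overline{m γ} = bar m γ ∈ Δ_M` and
`I_m(γ) = coc m γ ∈ SL(2,ℤ)`. -/
def HeckeData (M : ℕ) (bar : Delta M → SL(2, ℤ) → Delta M)
    (coc : Delta M → SL(2, ℤ) → SL(2, ℤ)) : Prop :=
  ∀ (m : Delta M) (γ : SL(2, ℤ)),
    ((coc m γ : SL(2, ℤ)) : GL2ℤ) * (bar m γ).1 = m.1 * (γ : GL2ℤ)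

/-- The representation `T_M ρ` on `V(ρ) ⊗ ℂ[Δ_M]` (coordinates `ι × Δ_M`):
`(T_M ρ)(γ) (v ⊗ 𝔢_m) = ρ(I_m(γ⁻¹)⁻¹) v ⊗ 𝔢_{m·γ⁻¹}`. -/
def heckeRep {ι : Type*} (M : ℕ) (ρ : SL(2, ℤ) → Matrix ι ι ℂ)
    (bar : Delta M → SL(2, ℤ) → Delta M) (coc : Delta M → SL(2, ℤ) → SL(2, ℤ)) :
    SL(2, ℤ) → Matrix (ι × Delta M) (ι × Delta M) ℂ :=
  fun γ p q => if p.2 = bar q.2 γ⁻¹ then ρ ((coc q.2 γ⁻¹)⁻¹) p.1 q.1 else 0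

/-- Möbius action of an upper triangular integer matrix `(a b; 0 d)` (with
`(aτ+b)/d ∈ ℍ`, as is the case for `m ∈ Δ_M`) on `ℍ`. -/
def utAct (m : GL2ℤ) (τ : ℍ) : ℍ :=
  if h : 0 < ((((m 0 0 : ℤ) : ℂ) * (τ : ℂ) + ((m 0 1 : ℤ) : ℂ)) / ((m 1 1 : ℤ) : ℂ)).im
  then ⟨_, h⟩ else τ

/-- The slash `(f ∣_k m)(τ) = (a/d)^{k/2} f((aτ+b)/d)` for `m = (a b; 0 d)`. -/
def mslash {ι : Type*} (k : ℤ) (m : GL2ℤ) (f : ℍ → ι → ℂ) : ℍ → ι → ℂ :=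
  fun τ => (((((m 0 0 : ℤ) : ℝ) / ((m 1 1 : ℤ) : ℝ)) ^ ((k : ℝ) / 2) : ℝ) : ℂ) • f (utAct m τ)

/-- The vector-valued Hecke operator on forms:
`T_M f = ∑_{m ∈ Δ_M} (f ∣_k m) ⊗ 𝔢_m`. -/
def heckeT {ι : Type*} (M : ℕ) (k : ℤ) (f : ℍ → ι → ℂ) : ℍ → (ι × Delta M) → ℂ :=
  fun τ p => mslash k p.2.1 f τ p.1

/-- Tensor product of vector-valued functions, `(f ⊗ g)(τ) = f(τ) ⊗ g(τ)`. -/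
def tensorF {α β : Type*} (f : ℍ → α → ℂ) (g : ℍ → β → ℂ) : ℍ → α × β → ℂ :=
  fun τ p => f τ p.1 * g τ p.2

/-! ### Right cosets and induced representations -/

/-- The set of right cosets `Γ\SL(2,ℤ)`. -/
def Cos (Γ : Subgroup SL(2, ℤ)) : Type := Quotient (QuotientGroup.rightRel Γ)

/-- The coset `Γ γ`. -/
def mkCos (Γ : Subgroup SL(2, ℤ)) (γ : SL(2, ℤ)) : Cos Γ :=
  Quotient.mk (QuotientGroup.rightRel Γ) γ

/-- Right translation of right cosets: `Γγ ↦ Γγδ`. -/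
def cosMul (Γ : Subgroup SL(2, ℤ)) (c : Cos Γ) (δ : SL(2, ℤ)) : Cos Γ :=
  Quotient.map' (· * δ) (by
    intro a b h
    rw [QuotientGroup.rightRel_apply] at h ⊢
    simpa [mul_assoc] using h) c

/-- `IsSection Γ sec` says `sec` picks a representative in each right coset of `Γ`,
with the identity coset represented by `1` (i.e. `1 ∈ B`). -/
def IsSection (Γ : Subgroup SL(2, ℤ)) (sec : Cos Γ → SL(2, ℤ)) : Prop :=
  (∀ c, mkCos Γ (sec c) = c) ∧ sec (mkCos Γ 1) = 1

/-- The cocycle `I_β(δ) ∈ Γ` of the chosen system of representatives: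
`β δ = I_β(δ) · overline{β δ}`, extended to all of `SL(2,ℤ)` by `I_β = I_{overline β}`. -/
def indCoc (Γ : Subgroup SL(2, ℤ)) (sec : Cos Γ → SL(2, ℤ)) (c : Cos Γ)
    (δ : SL(2, ℤ)) : SL(2, ℤ) :=
  sec c * δ * (sec (cosMul Γ c δ))⁻¹

/-- The induced representation `Ind_Γ χ` on `ℂ[Γ\SL(2,ℤ)]`, for a character given as
a function `χf : SL(2,ℤ) → ℂ` (evaluated only on elements of `Γ`):
`(Ind_Γ χ)(γ) 𝔢_β = χ(I_β(γ⁻¹)⁻¹) 𝔢_{β·γ⁻¹}`. -/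
def indRep (Γ : Subgroup SL(2, ℤ)) (sec : Cos Γ → SL(2, ℤ)) (χf : SL(2, ℤ) → ℂ) :
    SL(2, ℤ) → Matrix (Cos Γ) (Cos Γ) ℂ :=
  fun γ c c' => if c = cosMul Γ c' γ⁻¹ then χf ((indCoc Γ sec c' γ⁻¹)⁻¹) else 0

/-- The induced representation `Ind_Γ 𝟙` (a permutation representation). -/
def permRep (Γ : Subgroup SL(2, ℤ)) : SL(2, ℤ) → Matrix (Cos Γ) (Cos Γ) ℂ :=
  fun γ c c' => if c = cosMul Γ c' γ⁻¹ then 1 else 0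

/-- The induction map on modular forms, `Ind f = ∑_γ (f ∣_k γ) 𝔢_γ`. -/
def indForm (Γ : Subgroup SL(2, ℤ)) (sec : Cos Γ → SL(2, ℤ)) (k : ℤ) (f : ℍ → ℂ) :
    ℍ → Cos Γ → ℂ :=
  fun τ c => cslash k (sec c) f τ

/-- The pointwise pairing `⟨f, v⟩ : τ ↦ ⟨f(τ), v⟩` with respect to the scalar
product making the standard basis orthonormal. -/
def pairF {α : Type*} [Fintype α] (f : ℍ → α → ℂ) (v : α → ℂ) : ℍ → ℂ :=
  fun τ => ∑ a, f τ a * conj (v a)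

/-! ### Eisenstein series -/

/-- The matrix `T = (1 1; 0 1)`. -/
def Tmat : SL(2, ℤ) := ⟨!![1, 1; 0, 1], by norm_num [Matrix.det_fin_two_of]⟩

/-- The relation whose classes are the right cosets `Γ_∞(v) γ` of
`Γ_∞(v) = {γ ∈ Γ_∞ : ρ(γ) v = v}`. -/
def eisRel {ι : Type*} [Fintype ι] (ρ : SL(2, ℤ) → Matrix ι ι ℂ) (v : ι → ℂ)
    (a b : SL(2, ℤ)) : Prop :=
  ((b * a⁻¹ : SL(2, ℤ)) 1 0 : ℤ) = 0 ∧ (ρ (b * a⁻¹)).mulVec v = v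

/-- The index `[Γ_∞ : Γ_∞(v)]`. -/
def eisIndex {ι : Type*} [Fintype ι] (ρ : SL(2, ℤ) → Matrix ι ι ℂ) (v : ι → ℂ) : ℕ :=
  Nat.card (Quotient (Relation.EqvGen.setoid
    (fun a b : {g : SL(2, ℤ) // (g 1 0 : ℤ) = 0} => eisRel ρ v a.1 b.1)))

/-- The Eisenstein series
`E_{k,v} = [Γ_∞ : Γ_∞(v)]⁻¹ ∑_{γ ∈ Γ_∞(v)\SL(2,ℤ)} v ∣_{k,ρ} γ` (for `k > 2`). -/
def eisSeries {ι : Type*} [Fintype ι] (k : ℤ) (ρ : SL(2, ℤ) → Matrix ι ι ℂ)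
    (v : ι → ℂ) : ℍ → ι → ℂ :=
  fun τ => ((eisIndex ρ v : ℂ))⁻¹ •
    ∑' c : Quotient (Relation.EqvGen.setoid (eisRel ρ v)),
      vslash k ρ (Quotient.out c) (fun _ => v) τ

/-- The Eisenstein series defined via the Hecke trick,
`E_{k,v} = [Γ_∞ : Γ_∞(v)]⁻¹ lim_{s→0} ∑_{γ ∈ Γ_∞(v)\SL(2,ℤ)} y^s v ∣_{k,ρ} γ`. -/
def eisSeriesH {ι : Type*} [Fintype ι] (k : ℤ) (ρ : SL(2, ℤ) → Matrix ι ι ℂ)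
    (v : ι → ℂ) : ℍ → ι → ℂ :=
  fun τ => limUnder (nhdsWithin (0 : ℝ) (Set.Ioi 0)) (fun s : ℝ =>
    ((eisIndex ρ v : ℂ))⁻¹ •
      ∑' c : Quotient (Relation.EqvGen.setoid (eisRel ρ v)),
        ((((Quotient.out c • τ : ℍ).im) ^ s : ℝ) : ℂ) •
          vslash k ρ (Quotient.out c) (fun _ => v) τ)

/-- The Eisenstein space `E_k(ρ) = span{E_{k,v} : v ∈ V(ρ)}` (for `k > 2`). -/
def Ek {ι : Type*} [Fintype ι] (k : ℤ) (ρ : SL(2, ℤ) → Matrix ι ι ℂ) :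
    Submodule ℂ (ℍ → ι → ℂ) :=
  Submodule.span ℂ {f | ∃ v : ι → ℂ, f = eisSeries k ρ v}

/-- The submodule of `SL(2,ℤ)`-invariant vectors (the isotrivial component `ρ(𝟙)`). -/
def invariants {ι : Type*} [Fintype ι] (ρ : SL(2, ℤ) → Matrix ι ι ℂ) :
    Submodule ℂ (ι → ℂ) where
  carrier := {v | ∀ γ, (ρ γ).mulVec v = v}
  add_mem' := by
    intro a b ha hb γ
    rw [Matrix.mulVec_add, ha, hb]
  zero_mem' := by
    intro γ
    simp [Matrix.mulVec_zero]
  smul_mem' := by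
    intro c a ha γ
    rw [Matrix.mulVec_smul, ha]

/-- The subspace `V(ρ)(1)_T = {v : ρ(T) v = v}` of `T`-fixed vectors. -/
def fixedT {ι : Type*} [Fintype ι] (ρ : SL(2, ℤ) → Matrix ι ι ℂ) :
    Submodule ℂ (ι → ℂ) where
  carrier := {v | (ρ Tmat).mulVec v = v}
  add_mem' := by
    intro a b ha hb
    show (ρ Tmat).mulVec _ = _
    rw [Matrix.mulVec_add, ha, hb]
  zero_mem' := by
    show (ρ Tmat).mulVec _ = _
    simp [Matrix.mulVec_zero]
  smul_mem' := by
    intro c a ha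
    show (ρ Tmat).mulVec _ = _
    rw [Matrix.mulVec_smul, ha]

/-! ### The hyperbolic measure and Petersson scalar products -/

instance : MeasurableSpace ℍ := borel ℍ

/-- The measure `dx dy` on `ℍ` (hyperbolic weights are carried by the integrands). -/
def μH : Measure ℍ := (MeasureTheory.volume : Measure ℂ).comap (fun τ : ℍ => (τ : ℂ))

/-- The standard (closed) fundamental domain of `SL(2,ℤ)\ℍ`. -/
def fdSL : Set ℍ := ModularGroup.fd

/-- The Petersson scalar product `⟨f, g⟩_ι` of vector-valued forms `f` of type `ρ` and
`g` of type `σ`, with respect to the embedding `ι : 𝟙 ↪ ρ ⊗ σ̄` with `ι(1) = u`: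
`∫_{SL(2,ℤ)\ℍ} ⟨(f ⊗ ḡ)(τ), ι(1)⟩ y^{k-2} dx dy`. -/
def petersson {α β : Type*} [Fintype α] [Fintype β] (k : ℤ) (u : α × β → ℂ)
    (f : ℍ → α → ℂ) (g : ℍ → β → ℂ) : ℂ :=
  ∫ τ in fdSL, (∑ a, ∑ b, f τ a * conj (g τ b) * conj (u (a, b))) *
    ((τ.im : ℂ)) ^ (k - 2) ∂μH

/-- The regularized Petersson scalar product (regularized as the limit of integrals
over truncations of the fundamental domain). -/
def peterssonReg {α β : Type*} [Fintype α] [Fintype β] (k : ℤ) (u : α × β → ℂ)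
    (f : ℍ → α → ℂ) (g : ℍ → β → ℂ) : ℂ :=
  limUnder Filter.atTop (fun t : ℝ =>
    ∫ τ in {τ ∈ fdSL | τ.im ≤ t}, (∑ a, ∑ b, f τ a * conj (g τ b) * conj (u (a, b))) *
      ((τ.im : ℂ)) ^ (k - 2) ∂μH)

/-- The canonical `ι(1) = ∑_w w ⊗ w̄` for forms of the same type. -/
def diagPair (α : Type*) : α × α → ℂ := fun p => if p.1 = p.2 then 1 else 0

/-- A fundamental domain for `Γ\ℍ` obtained from coset representatives. -/
def fdGamma (Γ : Subgroup SL(2, ℤ)) (sec : Cos Γ → SL(2, ℤ)) : Set ℍ :=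
  ⋃ c : Cos Γ, (fun τ => sec c • τ) '' fdSL

/-- The normalized Petersson scalar product of two classical modular forms for `Γ`:
`[SL(2,ℤ):Γ]⁻¹ ∫_{Γ\ℍ} f(τ) conj(g(τ)) y^{k-2} dx dy`. -/
def peterssonGamma (k : ℤ) (Γ : Subgroup SL(2, ℤ)) (sec : Cos Γ → SL(2, ℤ))
    (f g : ℍ → ℂ) : ℂ :=
  ((Γ.index : ℂ))⁻¹ *
    ∫ τ in fdGamma Γ sec, f τ * conj (g τ) * ((τ.im : ℂ)) ^ (k - 2) ∂μH

/-! ### Kernels, finite index, instances -/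

/-- The kernel of a representation. -/
def repKer {ι : Type*} [Fintype ι] (ρ : SL(2, ℤ) → Matrix ι ι ℂ) (hρ : IsRep ρ) :
    Subgroup SL(2, ℤ) where
  carrier := {γ | ρ γ = 1}
  one_mem' := hρ.1
  mul_mem' := by
    intro a b ha hb
    show ρ (_ * _) = 1
    rw [hρ.2, ha, hb, one_mul]
  inv_mem' := by
    intro a ha
    show ρ _⁻¹ = 1
    have h2 := hρ.2 a⁻¹ a
    rw [inv_mul_cancel, hρ.1, ha, mul_one] at h2
    exact h2.symm

instance (Γ : Subgroup SL(2, ℤ)) [Γ.FiniteIndex] : Finite (Cos Γ) :=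
  Finite.of_equiv _ (QuotientGroup.quotientRightRelEquivQuotientLeftRel Γ).symm

instance (Γ : Subgroup SL(2, ℤ)) [Γ.FiniteIndex] : Fintype (Cos Γ) := Fintype.ofFinite _

instance (N : ℕ) [NeZero N] : (CongruenceSubgroup.Gamma N).FiniteIndex := by
  haveI : Finite (Matrix.SpecialLinearGroup (Fin 2) (ZMod N)) := Subtype.finite
  have : (CongruenceSubgroup.Gamma N) = (Matrix.SpecialLinearGroup.map (Int.castRingHom (ZMod N))).ker := rfl
  rw [this]
  infer_instance

instance (N : ℕ) [NeZero N] : (Gamma0 N).FiniteIndex := by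
  refine Subgroup.finiteIndex_of_le (H := CongruenceSubgroup.Gamma N) ?_
  intro γ hγ
  rw [Gamma_mem] at hγ
  rw [Gamma0_mem]
  exact hγ.2.2.1

instance (N : ℕ) [NeZero N] : (Gamma1 N).FiniteIndex := by
  refine Subgroup.finiteIndex_of_le (H := CongruenceSubgroup.Gamma N) ?_
  intro γ hγ
  rw [Gamma_mem] at hγ
  rw [Gamma1_mem]
  exact ⟨hγ.1, hγ.2.2.2, hγ.2.2.1⟩

/-- A sesquilinear scalar product on `ι → ℂ` with Gram matrix `B`:
`⟨v, w⟩_B = ∑_{i,j} conj(w i) B i j v j`. -/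
def sesq {ι : Type*} [Fintype ι] (B : Matrix ι ι ℂ) (v w : ι → ℂ) : ℂ :=
  ∑ i, ∑ j, conj (w i) * B i j * v j

/-- The scalar product `⟨v ⊗ 𝔢_m, w ⊗ 𝔢_{m'}⟩ = δ_{m,m'} ⟨v,w⟩_B` on `V(ρ) ⊗ ℂ[Δ_M]`. -/
def blockDiagGram {ι : Type*} (M : ℕ) (B : Matrix ι ι ℂ) :
    Matrix (ι × Delta M) (ι × Delta M) ℂ :=
  Matrix.of fun p q => if p.2 = q.2 then B p.1 q.1 else 0

/-- The inclusion `𝟙 → T_M 𝟙`, `c ↦ c ∑_{m ∈ Δ_M} 𝔢_m`. -/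
def oneIncl (M : ℕ) : Matrix (Unit × Delta M) Unit ℂ :=
  Matrix.of fun _ _ => 1

/-- `T_M φ` for a homomorphism (intertwining matrix) `φ : ρ → σ`:
`v ⊗ 𝔢_m ↦ φ(v) ⊗ 𝔢_m`. -/
def heckeHom {ι κ : Type*} (M : ℕ) (φ : Matrix κ ι ℂ) :
    Matrix (κ × Delta M) (ι × Delta M) ℂ :=
  fun p q => if p.2 = q.2 then φ p.1 q.1 else 0

/-- The surjection `(T_M ρ) ⊗ (T_M σ) → T_M (ρ ⊗ σ)`:
`(v ⊗ 𝔢_m) ⊗ (w ⊗ 𝔢_{m'}) ↦ δ_{m,m'} (v ⊗ w) ⊗ 𝔢_m`. -/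
def heckeTenProj (ι κ : Type*) (M : ℕ) :
    Matrix ((ι × κ) × Delta M) ((ι × Delta M) × (κ × Delta M)) ℂ :=
  fun p q => if p.1.1 = q.1.1 ∧ p.1.2 = q.2.1 ∧ p.2 = q.1.2 ∧ q.1.2 = q.2.2 then 1 else 0

/-! ### Classical operators, special matrices, and intertwining inclusions -/

set_option linter.unnecessarySeqFocus false

/-- The scalar slash `(f ∣_k m)(τ) = (a/d)^{k/2} f((aτ+b)/d)` for `m = (a b; 0 d)`. -/
def cmslash (k : ℤ) (m : GL2ℤ) (f : ℍ → ℂ) : ℍ → ℂ :=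
  fun τ => (((((m 0 0 : ℤ) : ℝ) / ((m 1 1 : ℤ) : ℝ)) ^ ((k : ℝ) / 2) : ℝ) : ℂ) *
    f (utAct m τ)

/-- `𝔢_γ`, the standard basis vector of `ℂ[Γ\SL(2,ℤ)]` at the coset `Γγ`. -/
def eCos (Γ : Subgroup SL(2, ℤ)) (γ : SL(2, ℤ)) : Cos Γ → ℂ :=
  fun c => if c = mkCos Γ γ then 1 else 0

/-- The matrix `m_M = diag(M, 1) ∈ Δ_M`. -/
def mMat (M : ℕ) (hM : 0 < M) : Delta M :=
  ⟨!![(M : ℤ), 0; 0, 1], by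
    refine ⟨?_, ?_, ?_, ?_, ?_⟩ <;> simp <;> omega⟩

/-- The matrix `m'_M = diag(1, M) ∈ Δ_M`. -/
def mMat' (M : ℕ) (hM : 0 < M) : Delta M :=
  ⟨!![1, 0; 0, (M : ℤ)], by
    refine ⟨?_, ?_, ?_, ?_, ?_⟩ <;> simp <;> omega⟩

/-- The matrix `m_{M,b} = (M b; 0 M) ∈ Δ_{M²}` for `0 ≤ b < M`. -/
def mMatB (M : ℕ) (b : Fin M) : Delta (M * M) :=
  ⟨!![(M : ℤ), (b : ℤ); 0, (M : ℤ)], by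
    have hb := b.2
    refine ⟨?_, ?_, ?_, ?_, ?_⟩ <;> simp <;> omega⟩

/-- The matrix `diag(M, M) ∈ Δ_{M²}`. -/
def mMatMM (M : ℕ) (hM : 0 < M) : Delta (M * M) :=
  ⟨!![(M : ℤ), 0; 0, (M : ℤ)], by
    refine ⟨?_, ?_, ?_, ?_, ?_⟩ <;> simp <;> omega⟩

/-- Rescaling `({\rm sc}_M f)(τ) = f(M τ)`. -/
def scMul (M : ℕ) (f : ℍ → ℂ) : ℍ → ℂ := fun τ => f (utAct !![(M : ℤ), 0; 0, 1] τ)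

/-- Rescaling `({\rm sc}_{1/M} f)(τ) = f(τ / M)`. -/
def scDiv (M : ℕ) (f : ℍ → ℂ) : ℍ → ℂ := fun τ => f (utAct !![1, 0; 0, (M : ℤ)] τ)

/-- The classical Hecke operator
`(f ∣_{k,χ} T_M)(τ) = M^{k-1} ∑_{d ∣ M, 0 ≤ b < d} d^{-k} conj(χ(d)) f((M d⁻¹ τ + b)/d)`. -/
def classicalHecke {N : ℕ} (M : ℕ) (k : ℤ) (χ : DirichletCharacter ℂ N)
    (f : ℍ → ℂ) : ℍ → ℂ :=
  fun τ => (M : ℂ) ^ (k - 1) *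
    ∑ d ∈ M.divisors, ∑ b ∈ Finset.range d,
      ((d : ℂ)) ^ (-k) * conj (χ ((d : ℕ) : ZMod N)) *
        f (utAct !![((M / d : ℕ) : ℤ), (b : ℤ); 0, ((d : ℕ) : ℤ)] τ)

/-- `e_M(x) = exp(2πi x/M)`. -/
def eM (M : ℕ) (x : ℤ) : ℂ := Complex.exp (2 * Real.pi * Complex.I * x / M)

/-- The Gauss sum `G(ε, e_M(b)) = ∑_{a mod M} ε(a) e_M(a b)`. -/
def gaussSumE {M : ℕ} (ε : DirichletCharacter ℂ M) (b : ℤ) : ℂ :=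
  ∑ a ∈ Finset.range M, ε ((a : ℕ) : ZMod M) * eM M ((a : ℤ) * b)

/-- The value `χ(I_{I₂}(δ))` of a Dirichlet character mod `N` on the cocycle
`I_{I₂}(δ) ∈ Γ₀(N)`. -/
def cocVal {N : ℕ} (χ : DirichletCharacter ℂ N) (sec : Cos (Gamma0 N) → SL(2, ℤ))
    (δ : SL(2, ℤ)) : ℂ :=
  dirSL χ (indCoc (Gamma0 N) sec (mkCos (Gamma0 N) 1) δ)

/-- The inclusion `ι_Hecke : ρ_χ → T_M ρ_χ`,
`𝔢_γ ↦ M^{k/2-1} ∑_{m ∈ Δ_M} χ(m) conj(χ(I_{I₂}(I_m(γ)))) 𝔢_{I_m(γ)} ⊗ 𝔢_{m·γ}`. -/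
def iotaHecke {N : ℕ} (M : ℕ) (k : ℤ) (χ : DirichletCharacter ℂ N)
    (sec : Cos (Gamma0 N) → SL(2, ℤ))
    (bar : Delta M → SL(2, ℤ) → Delta M) (coc : Delta M → SL(2, ℤ) → SL(2, ℤ)) :
    Matrix (Cos (Gamma0 N) × Delta M) (Cos (Gamma0 N)) ℂ :=
  Matrix.of fun p c =>
    ((((M : ℝ) ^ ((k : ℝ) / 2 - 1) : ℝ)) : ℂ) *
      ∑ m : Delta M,
        if p.2 = bar m (sec c) ∧ p.1 = mkCos (Gamma0 N) (coc m (sec c)) then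
          χ ((m.1 1 1 : ℤ) : ZMod N) * conj (cocVal χ sec (coc m (sec c)))
        else 0

/-- The inclusion `ι_AL : ρ_{χ'} → T_M ρ_χ`,
`𝔢_γ ↦ conj(χ(I_{I₂}(γ_{M,N} I_{m_M}(γ)))) 𝔢_{γ_{M,N} I_{m_M}(γ)} ⊗ 𝔢_{m_M·γ}`. -/
def iotaAL {N : ℕ} (M : ℕ) (hM : 0 < M) (χ : DirichletCharacter ℂ N)
    (sec : Cos (Gamma0 N) → SL(2, ℤ)) (γMN : SL(2, ℤ))
    (bar : Delta M → SL(2, ℤ) → Delta M) (coc : Delta M → SL(2, ℤ) → SL(2, ℤ)) :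
    Matrix (Cos (Gamma0 N) × Delta M) (Cos (Gamma0 N)) ℂ :=
  Matrix.of fun p c =>
    if p.2 = bar (mMat M hM) (sec c) ∧
        p.1 = mkCos (Gamma0 N) (γMN * coc (mMat M hM) (sec c)) then
      conj (cocVal χ sec (γMN * coc (mMat M hM) (sec c)))
    else 0

/-- The inclusion `ι_old : ρ_{χ_M} → T_M ρ_χ`,
`𝔢_γ ↦ M^{-k/2} conj(χ(I_{I₂}(I_{m_M}(γ)))) 𝔢_{I_{m_M}(γ)} ⊗ 𝔢_{m_M·γ}`. -/
def iotaOld {N : ℕ} (M : ℕ) (hM : 0 < M) (k : ℤ) (χ : DirichletCharacter ℂ N)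
    (sec : Cos (Gamma0 N) → SL(2, ℤ)) (secMN : Cos (Gamma0 (M * N)) → SL(2, ℤ))
    (bar : Delta M → SL(2, ℤ) → Delta M) (coc : Delta M → SL(2, ℤ) → SL(2, ℤ)) :
    Matrix (Cos (Gamma0 N) × Delta M) (Cos (Gamma0 (M * N))) ℂ :=
  Matrix.of fun p c =>
    if p.2 = bar (mMat M hM) (secMN c) ∧
        p.1 = mkCos (Gamma0 N) (coc (mMat M hM) (secMN c)) then
      ((((M : ℝ) ^ (-((k : ℝ) / 2)) : ℝ)) : ℂ) *
        conj (cocVal χ sec (coc (mMat M hM) (secMN c)))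
    else 0

/-- The subgroup `Γ₁(N², N) = {γ : c(γ) ≡ 0 mod N², a(γ) ≡ d(γ) ≡ 1 mod N}`. -/
def Gamma1Sq (N : ℕ) : Subgroup SL(2, ℤ) := Gamma0 (N * N) ⊓ Gamma1 N

instance (N : ℕ) [NeZero N] : (Gamma1Sq N).FiniteIndex := by
  unfold Gamma1Sq
  infer_instance

/-- The inclusion `ι_{Γ(N)} : ρ_{Γ(N)} → T_N ρ_{Γ₁(N²,N)}`,
`𝔢_γ ↦ N^{k/2} 𝔢_{I_{m'_N}(γ)} ⊗ 𝔢_{m'_N·γ}`. -/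
def iotaGammaN (N : ℕ) (hN : 0 < N) (k : ℤ)
    (secG : Cos (CongruenceSubgroup.Gamma N) → SL(2, ℤ))
    (bar : Delta N → SL(2, ℤ) → Delta N) (coc : Delta N → SL(2, ℤ) → SL(2, ℤ)) :
    Matrix (Cos (Gamma1Sq N) × Delta N) (Cos (CongruenceSubgroup.Gamma N)) ℂ :=
  Matrix.of fun p c =>
    if p.2 = bar (mMat' N hN) (secG c) ∧
        p.1 = mkCos (Gamma1Sq N) (coc (mMat' N hN) (secG c)) then
      ((((N : ℝ) ^ ((k : ℝ) / 2) : ℝ)) : ℂ)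
    else 0

/-- The inclusion `ι_twist : ρ_{χ'} → T_{M²} ρ_χ`,
`𝔢_γ ↦ M⁻¹ ∑_{b mod M} G(ε, e_M(-b)) conj(χ(I_{I₂}(I_{m_{M,b}}(γ))))
𝔢_{I_{m_{M,b}}(γ)} ⊗ 𝔢_{m_{M,b}·γ}`. -/
def iotaTwist {N : ℕ} (M : ℕ) (χ : DirichletCharacter ℂ N)
    (ε : DirichletCharacter ℂ M)
    (sec : Cos (Gamma0 N) → SL(2, ℤ)) (sec' : Cos (Gamma0 (N * (M * M))) → SL(2, ℤ))
    (bar : Delta (M * M) → SL(2, ℤ) → Delta (M * M))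
    (coc : Delta (M * M) → SL(2, ℤ) → SL(2, ℤ)) :
    Matrix (Cos (Gamma0 N) × Delta (M * M)) (Cos (Gamma0 (N * (M * M)))) ℂ :=
  Matrix.of fun p c =>
    ((M : ℂ))⁻¹ *
      ∑ b : Fin M,
        if p.2 = bar (mMatB M b) (sec' c) ∧
            p.1 = mkCos (Gamma0 N) (coc (mMatB M b) (sec' c)) then
          gaussSumE ε (-(b : ℤ)) * conj (cocVal χ sec (coc (mMatB M b) (sec' c)))
        else 0

/-- The inclusion `ι_id : ρ_χ → T_{M²} ρ_χ`, `𝔢_γ ↦ 𝔢_γ ⊗ 𝔢_{diag(M,M)}`. -/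
def iotaId {N : ℕ} (M : ℕ) (hM : 0 < M) :
    Matrix (Cos (Gamma0 N) × Delta (M * M)) (Cos (Gamma0 N)) ℂ :=
  Matrix.of fun p c => if p.1 = c ∧ p.2 = mMatMM M hM then 1 else 0

end VVMF

/-!
For a coset representative `β`, the Hecke data give `m_M β = I · m` with `m ∈ Δ_M`, and
`γ_{M,N} I = g β'` where `β'` represents the coset of `γ_{M,N} I` and `g ∈ Γ₀(N)`. On `Δ_M` the
slash `∣_k m` is the `GL₂(ℝ)⁺` slash up to a scalar depending only on `M` and `k`, so it is
compatible with the cocycle relation, and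
`(f ∣ γ_{M,N} ∣ m_M) ∣ β = f ∣ γ_{M,N} I ∣ m = χ(g) · f ∣ β' ∣ m`,
which is `χ(g)` times the `(β', m)` entry of `T_M Ind f`: exactly what `ι_ALᴴ` picks out.
The second identity is adjointness of `ι_AL` for the standard scalar product.
-/

namespace VVMF

open ModularForm UpperHalfPlane

lemma denomZ_eq_denom (γ : SL(2, ℤ)) (τ : ℍ) : denomZ γ τ = denom γ τ := by
  simp [denomZ, ModularGroup.denom_apply]

lemma cslash_eq_slash (k : ℤ) (γ : SL(2, ℤ)) (f : ℍ → ℂ) : cslash k γ f = f ∣[k] γ := by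
  ext τ
  rw [SL_slash_apply, cslash, denomZ_eq_denom, mul_comm]

namespace Delta

variable {M : ℕ}

lemma lower_right_pos (m : Delta M) : 0 < m.1 1 1 := m.2.2.2.2.1.trans_lt m.2.2.2.2.2

lemma level_pos (m : Delta M) : 0 < M := by
  have := mul_pos m.2.2.1 m.lower_right_pos
  rw [m.2.2.2.1] at this
  exact_mod_cast this

lemma det_map_eq (m : Delta M) : (m.1.map (Int.cast : ℤ → ℝ)).det = M := by
  have h := m.2.2.2.1
  rw [Matrix.det_fin_two]
  simp only [Matrix.map_apply, m.2.1, Int.cast_zero, mul_zero, sub_zero]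
  exact_mod_cast h

def toGL (m : Delta M) : GL (Fin 2) ℝ :=
  Matrix.GeneralLinearGroup.mkOfDetNeZero (m.1.map (Int.cast : ℤ → ℝ))
    (m.det_map_eq ▸ Nat.cast_ne_zero.2 m.level_pos.ne')

lemma val_toGL (m : Delta M) :
    (m.toGL : Matrix (Fin 2) (Fin 2) ℝ) = m.1.map (Int.cast : ℤ → ℝ) := rfl

lemma det_toGL (m : Delta M) : (m.toGL.det : ℝ) = M := by
  rw [Matrix.GeneralLinearGroup.val_det_apply, val_toGL, det_map_eq]

lemma denom_toGL (m : Delta M) (z : ℂ) : denom m.toGL z = m.1 1 1 := by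
  simp [denom, val_toGL, m.2.1]

lemma utAct_eq_smul (m : Delta M) (τ : ℍ) : utAct m.1 τ = m.toGL • τ := by
  have hM : (0 : ℝ) < m.toGL.det.val := by rw [det_toGL]; exact_mod_cast m.level_pos
  have hquot : num m.toGL τ / denom m.toGL τ
      = ((m.1 0 0 : ℂ) * τ + (m.1 0 1 : ℂ)) / (m.1 1 1 : ℂ) := by
    simp [num, denom, val_toGL, m.2.1]
  have him := (m.toGL • τ).im_pos
  rw [← UpperHalfPlane.coe_im, coe_smul_of_det_pos hM, hquot] at him
  ext
  rw [coe_smul_of_det_pos hM, hquot, utAct, dif_pos him]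

lemma entry_ratio_rpow (m : Delta M) (k : ℤ) :
    ((m.1 0 0 : ℝ) / m.1 1 1) ^ ((k : ℝ) / 2) =
      (M : ℝ) ^ ((k : ℝ) / 2) * (m.1 1 1 : ℝ) ^ (-k) := by
  have hd : (0 : ℝ) < m.1 1 1 := by exact_mod_cast m.lower_right_pos
  have hdet : (m.1 0 0 : ℝ) * m.1 1 1 = M := by exact_mod_cast m.2.2.2.1
  have hsq : ((m.1 1 1 : ℝ) ^ 2) ^ ((k : ℝ) / 2) = (m.1 1 1 : ℝ) ^ k := by
    rw [← Real.rpow_natCast_mul hd.le]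
    norm_num [mul_div_cancel₀, Real.rpow_intCast]
  rw [show (m.1 0 0 : ℝ) / m.1 1 1 = M / (m.1 1 1 : ℝ) ^ 2 by
      rw [← hdet]; field_simp,
    Real.div_rpow (by positivity) (by positivity), hsq, _root_.zpow_neg, div_eq_mul_inv]

lemma cmslash_eq_smul_slash (m : Delta M) (k : ℤ) (f : ℍ → ℂ) :
    cmslash k m.1 f =
      ((((M : ℝ) ^ ((k : ℝ) / 2) : ℝ) : ℂ) * (M : ℂ) ^ (1 - k)) • f ∣[k] m.toGL := by
  have hM : (0 : ℝ) < m.toGL.det.val := by rw [det_toGL]; exact_mod_cast m.level_pos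
  ext τ
  simp only [cmslash, slash_apply, σ, det_toGL, Pi.smul_apply, smul_eq_mul]
  have hM0 : (M : ℂ) ≠ 0 := by exact_mod_cast m.level_pos.ne'
  have hMk : (M : ℂ) ^ (1 - k) * (M : ℂ) ^ (k - 1) = 1 := by rw [← zpow_add₀ hM0]; simp
  rw [if_pos (by exact_mod_cast m.level_pos), abs_of_pos (by exact_mod_cast m.level_pos),
    denom_toGL, ← utAct_eq_smul, entry_ratio_rpow, ContinuousAlgEquiv.refl_apply]
  push_cast
  linear_combination
    -(((M : ℝ) ^ ((k : ℝ) / 2) : ℝ) : ℂ) * (m.1 1 1 : ℂ) ^ (-k) * f (utAct m.1 τ) * hMk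

lemma toGL_mul_of_mul_eq {m m' : Delta M} {I β : SL(2, ℤ)} (h : (I : GL2ℤ) * m'.1 = m.1 * β) :
    (I : GL (Fin 2) ℝ) * m'.toGL = m.toGL * β := by
  apply Units.ext
  have := congrArg (fun A => A.map (Int.castRingHom ℝ)) h
  simp only [Matrix.map_mul] at this
  simpa [val_toGL] using this

lemma cmslash_slash_of_mul_eq {m m' : Delta M} {I β : SL(2, ℤ)}
    (h : (I : GL2ℤ) * m'.1 = m.1 * β) (k : ℤ) (f : ℍ → ℂ) :
    cmslash k m.1 f ∣[k] β = cmslash k m'.1 (f ∣[k] I) := by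
  rw [cmslash_eq_smul_slash, cmslash_eq_smul_slash, SL_smul_slash, SL_slash,
    ← SlashAction.slash_mul, SL_slash, ← SlashAction.slash_mul, toGL_mul_of_mul_eq h]

end Delta

lemma dirSL_mul_dirSL_inv {N : ℕ} (χ : DirichletCharacter ℂ N) {g : SL(2, ℤ)}
    (hg : g ∈ Gamma0 N) : dirSL χ g * dirSL χ g⁻¹ = 1 := by
  have hdet : g 1 1 * g 0 0 = 1 + g 0 1 * g 1 0 := by
    have := g.det_coe; rw [Matrix.det_fin_two] at this; linarith
  have hc : ((g 1 0 : ℤ) : ZMod N) = 0 := Gamma0_mem.1 hg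
  rw [dirSL, dirSL, Matrix.SpecialLinearGroup.SL2_inv_expl g, ← map_mul, ← Int.cast_mul]
  simp [hdet, hc]

lemma slash_eq_dirSL_smul {N : ℕ} {k : ℤ} {χ : DirichletCharacter ℂ N} {f : ℍ → ℂ}
    (hf : ∀ γ ∈ Gamma0 N, (fun τ => dirSL χ γ⁻¹ * cslash k γ f τ) = f)
    {g : SL(2, ℤ)} (hg : g ∈ Gamma0 N) : f ∣[k] g = dirSL χ g • f := by
  ext τ
  have hτ := congrFun (hf g hg) τ
  rw [cslash_eq_slash] at hτ
  calc (f ∣[k] g) τ = dirSL χ g * (dirSL χ g⁻¹ * (f ∣[k] g) τ) := by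
        rw [← mul_assoc, dirSL_mul_dirSL_inv χ hg, one_mul]
    _ = (dirSL χ g • f) τ := by rw [hτ]; rfl

lemma cmslash_smul (k : ℤ) (m : GL2ℤ) (c : ℂ) (f : ℍ → ℂ) :
    cmslash k m (c • f) = c • cmslash k m f := by
  ext τ
  simp only [cmslash, Pi.smul_apply, smul_eq_mul, mul_left_comm]

lemma heckeT_indForm_apply {M : ℕ} (Γ : Subgroup SL(2, ℤ)) (sec : Cos Γ → SL(2, ℤ)) (k : ℤ)
    (f : ℍ → ℂ) (τ : ℍ) (c : Cos Γ) (m : Delta M) :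
    heckeT M k (indForm Γ sec k f) τ (c, m) = cmslash k m.1 (f ∣[k] sec c) τ := by
  simp [heckeT, mslash, cmslash, indForm, cslash_eq_slash]

namespace IsSection

variable {Γ : Subgroup SL(2, ℤ)} {sec : Cos Γ → SL(2, ℤ)}

lemma mul_inv_sec_mem (hsec : IsSection Γ sec) (δ : SL(2, ℤ)) :
    δ * (sec (mkCos Γ δ))⁻¹ ∈ Γ :=
  QuotientGroup.rightRel_apply.mp (Quotient.exact (hsec.1 (mkCos Γ δ)))

lemma cocVal_eq {N : ℕ} {sec : Cos (Gamma0 N) → SL(2, ℤ)} (hsec : IsSection (Gamma0 N) sec)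
    (χ : DirichletCharacter ℂ N) (δ : SL(2, ℤ)) :
    cocVal χ sec δ = dirSL χ (δ * (sec (mkCos (Gamma0 N) δ))⁻¹) := by
  have hδ : cosMul (Gamma0 N) (mkCos (Gamma0 N) 1) δ = mkCos (Gamma0 N) δ :=
    congrArg (mkCos _) (one_mul δ)
  rw [cocVal, indCoc, hsec.2, one_mul, hδ]

end IsSection

lemma iotaAL_conjTranspose_mulVec_apply {N : ℕ} [NeZero N] (M : ℕ) (hM : 0 < M)
    (χ : DirichletCharacter ℂ N) (sec : Cos (Gamma0 N) → SL(2, ℤ)) (γMN : SL(2, ℤ))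
    (bar : Delta M → SL(2, ℤ) → Delta M) (coc : Delta M → SL(2, ℤ) → SL(2, ℤ))
    (x : Cos (Gamma0 N) × Delta M → ℂ) (c : Cos (Gamma0 N)) :
    ((iotaAL M hM χ sec γMN bar coc)ᴴ *ᵥ x) c =
      cocVal χ sec (γMN * coc (mMat M hM) (sec c)) *
        x (mkCos (Gamma0 N) (γMN * coc (mMat M hM) (sec c)), bar (mMat M hM) (sec c)) := by
  simp only [mulVec, dotProduct, conjTranspose_apply, iotaAL, of_apply]
  rw [Fintype.sum_eq_single (mkCos (Gamma0 N) (γMN * coc (mMat M hM) (sec c)),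
    bar (mMat M hM) (sec c))]
  · simp
  · rintro ⟨c', m⟩ hp
    rw [if_neg (fun h => hp (Prod.ext h.2 h.1)), star_zero, zero_mul]

lemma pairF_conjTranspose_mulVec {α β : Type*} [Fintype α] [Fintype β] (A : Matrix α β ℂ)
    (x : ℍ → α → ℂ) (v : β → ℂ) :
    pairF (fun τ => Aᴴ *ᵥ x τ) v = pairF x (A *ᵥ v) := by
  funext τ
  simp only [pairF, mulVec, dotProduct, conjTranspose_apply, map_sum, map_mul,
    Finset.sum_mul, Finset.mul_sum]
  rw [Finset.sum_comm]
  refine Finset.sum_congr rfl fun a _ => Finset.sum_congr rfl fun b _ => ?_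
  rw [← starRingEnd_apply]
  ring

lemma indForm_atkinLehner_eq_conjTranspose_mulVec_heckeT {N : ℕ} [NeZero N] (M : ℕ)
    (hM : 0 < M) (k : ℤ) (χ : DirichletCharacter ℂ N) (sec : Cos (Gamma0 N) → SL(2, ℤ))
    (hsec : IsSection (Gamma0 N) sec) (γMN : SL(2, ℤ))
    (bar : Delta M → SL(2, ℤ) → Delta M) (coc : Delta M → SL(2, ℤ) → SL(2, ℤ))
    (hd : HeckeData M bar coc) (f : ℍ → ℂ)
    (hf : ∀ γ ∈ Gamma0 N, (fun τ => dirSL χ γ⁻¹ * cslash k γ f τ) = f) :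
    indForm (Gamma0 N) sec k (cmslash k (mMat M hM).1 (cslash k γMN f)) =
      fun τ =>
        (iotaAL M hM χ sec γMN bar coc)ᴴ *ᵥ heckeT M k (indForm (Gamma0 N) sec k f) τ := by
  funext τ c
  set m := bar (mMat M hM) (sec c)
  set δ := γMN * coc (mMat M hM) (sec c)
  set β' := sec (mkCos (Gamma0 N) δ)
  rw [iotaAL_conjTranspose_mulVec_apply, heckeT_indForm_apply, hsec.cocVal_eq]
  calc indForm (Gamma0 N) sec k (cmslash k (mMat M hM).1 (cslash k γMN f)) τ c
      = (cmslash k (mMat M hM).1 (f ∣[k] γMN) ∣[k] sec c) τ := by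
        simp only [indForm, cslash_eq_slash]
    _ = cmslash k m.1 (f ∣[k] δ) τ := by
        rw [Delta.cmslash_slash_of_mul_eq (hd _ _), SlashAction.slash_mul]
    _ = cmslash k m.1 ((f ∣[k] (δ * β'⁻¹)) ∣[k] β') τ := by
        rw [← SlashAction.slash_mul, inv_mul_cancel_right]
    _ = dirSL χ (δ * β'⁻¹) * cmslash k m.1 (f ∣[k] β') τ := by
        rw [slash_eq_dirSL_smul hf (hsec.mul_inv_sec_mem δ), SL_smul_slash, cmslash_smul]
        rfl

end VVMF

open VVMF

theorem atkin_lehner_from_vector_valued_general {N : ℕ} [NeZero N] (M : ℕ) (hM : 0 < M) (k : ℤ)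
    (χ : DirichletCharacter ℂ N)
    (sec : Cos (Gamma0 N) → SL(2, ℤ)) (hsec : IsSection (Gamma0 N) sec)
    (γMN : SL(2, ℤ))
    (bar : Delta M → SL(2, ℤ) → Delta M) (coc : Delta M → SL(2, ℤ) → SL(2, ℤ))
    (hd : HeckeData M bar coc)
    (f : ℍ → ℂ) (hf : IsModFormChi k χ f) (v : Cos (Gamma0 N) → ℂ) :
    pairF (indForm (Gamma0 N) sec k (cmslash k (mMat M hM).1 (cslash k γMN f))) v =
      pairF (fun τ => (iotaAL M hM χ sec γMN bar coc)ᴴ.mulVec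
        (heckeT M k (indForm (Gamma0 N) sec k f) τ)) v ∧
    pairF (indForm (Gamma0 N) sec k (cmslash k (mMat M hM).1 (cslash k γMN f))) v =
      pairF (heckeT M k (indForm (Gamma0 N) sec k f))
        ((iotaAL M hM χ sec γMN bar coc).mulVec v) := by
  rw [indForm_atkinLehner_eq_conjTranspose_mulVec_heckeT M hM k χ sec hsec γMN bar coc hd f
    hf.2.1]
  exact ⟨rfl, pairF_conjTranspose_mulVec _ _ _⟩

/-- The inclusion `ι_AL` and its adjoint projection `π_AL = ι_ALᴴ`
intertwine the Atkin–Lehner involution `W_M(f) = f ∣_k (γ_{M,N} m_M)` and the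
vector-valued Hecke operator with the induction map: for `f ∈ M_k(Γ₀(N), χ)` and
`v ∈ V(ρ_{χ'})`,
`⟨Ind(W_M f), v⟩ = ⟨π_AL(T_M Ind f), v⟩ = ⟨T_M Ind f, ι_AL v⟩`. -/
theorem atkin_lehner_from_vector_valued {N : ℕ} [NeZero N] (M : ℕ) (hM : 0 < M)
    (hMdvd : M ∣ N) (hcop : Nat.Coprime M (N / M)) (k : ℤ)
    (χ : DirichletCharacter ℂ N)
    (χM : DirichletCharacter ℂ M) (χNM : DirichletCharacter ℂ (N / M))
    (hfact : ∀ a : ℤ, χ ((a : ZMod N)) = χM ((a : ZMod M)) * χNM ((a : ZMod (N / M))))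
    (χ' : DirichletCharacter ℂ N)
    (hχ' : ∀ a : ℤ,
      χ' ((a : ZMod N)) = conj (χM ((a : ZMod M))) * χNM ((a : ZMod (N / M))))
    (sec : Cos (Gamma0 N) → SL(2, ℤ)) (hsec : IsSection (Gamma0 N) sec)
    (γMN : SL(2, ℤ)) (hγrep : sec (mkCos (Gamma0 N) γMN) = γMN)
    (hγM : ((γMN 0 0 : ℤ) : ZMod M) = 0 ∧ ((γMN 0 1 : ℤ) : ZMod M) = -1 ∧
      ((γMN 1 0 : ℤ) : ZMod M) = 1 ∧ ((γMN 1 1 : ℤ) : ZMod M) = 0)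
    (hγNM : ((γMN 0 0 : ℤ) : ZMod (N / M)) = 1 ∧ ((γMN 0 1 : ℤ) : ZMod (N / M)) = 0 ∧
      ((γMN 1 0 : ℤ) : ZMod (N / M)) = 0 ∧ ((γMN 1 1 : ℤ) : ZMod (N / M)) = 1)
    (bar : Delta M → SL(2, ℤ) → Delta M) (coc : Delta M → SL(2, ℤ) → SL(2, ℤ))
    (hd : HeckeData M bar coc)
    (f : ℍ → ℂ) (hf : IsModFormChi k χ f) (v : Cos (Gamma0 N) → ℂ) :
    pairF (indForm (Gamma0 N) sec k (cmslash k (mMat M hM).1 (cslash k γMN f))) v =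
      pairF (fun τ => (iotaAL M hM χ sec γMN bar coc)ᴴ.mulVec
        (heckeT M k (indForm (Gamma0 N) sec k f) τ)) v ∧
    pairF (indForm (Gamma0 N) sec k (cmslash k (mMat M hM).1 (cslash k γMN f))) v =
      pairF (heckeT M k (indForm (Gamma0 N) sec k f))
        ((iotaAL M hM χ sec γMN bar coc).mulVec v) :=
  atkin_lehner_from_vector_valued_general M hM k χ sec hsec γMN bar coc hd f hf v
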